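/- Let f : [0,1] → [0,1] be continuous and strictly increasing with f(0) = 0 and f(1) = 1. Then for every ε > 0 there exist an integer n ≥ 1 and a function V ∈ W_n such that |V(x) − f(x)| ≤ ε for all x ∈ [0,1]. -/

import Mathlib

/-- `Wn n` is the set of cumulative valuation functions `V : [0,1] → [0,1]` (encoded as
functions `ℝ → ℝ` with the relevant conditions on `[0,1]`) that are nondecreasing, satisfy
`V(0) = 0`, `V(1) = 1`, take values in `{0, 1/n, …, 1}` at the grid points `i/n`, and are
affine on each grid interval `[i/n, (i+1)/n]`. -/
def Wn (n : ℕ) : Set (ℝ → ℝ) :=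
  { V | (∀ x ∈ Set.Icc (0:ℝ) 1, V x ∈ Set.Icc (0:ℝ) 1) ∧
        MonotoneOn V (Set.Icc (0:ℝ) 1) ∧
        V 0 = 0 ∧ V 1 = 1 ∧
        (∀ i : ℕ, i ≤ n → ∃ k : ℕ, V ((i : ℝ) / n) = (k : ℝ) / n) ∧
        (∀ i : ℕ, i < n → ∀ x : ℝ, (i : ℝ) / n ≤ x → x ≤ ((i : ℝ) + 1) / n →
          V x = V ((i : ℝ) / n) +
            (n : ℝ) * (x - (i : ℝ) / n) * (V (((i : ℝ) + 1) / n) - V ((i : ℝ) / n))) }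

/-! Round `f` down to the grid `ℕ / n` at the nodes `k / n` and interpolate linearly. The result
lies in `W_n`, and on each cell `[i/n, (i+1)/n]` it lies between the rounded values at the two
ends, so, `f` being monotone, it differs from `f` by at most the oscillation of `f` over a cell
plus the rounding error `1/n`. Uniform continuity of `f` makes both small for large `n`. -/

open Set

lemma natCast_div_mem_Icc {k n : ℕ} (h : k ≤ n) : (k : ℝ) / n ∈ Icc (0 : ℝ) 1 :=
  ⟨by positivity, div_le_one_of_le₀ (by exact_mod_cast h) (by positivity)⟩

lemma exists_grid_cell {n : ℕ} (hn : n ≠ 0) {x : ℝ} (hx : x ∈ Icc (0 : ℝ) 1) :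
    ∃ i < n, (i : ℝ) / n ≤ x ∧ x ≤ ((i : ℝ) + 1) / n := by
  have hn' : (0 : ℝ) < n := Nat.cast_pos.2 (Nat.pos_of_ne_zero hn)
  have hnx : 0 ≤ n * x := mul_nonneg hn'.le hx.1
  rcases hx.2.lt_or_eq with hx₁ | rfl
  · refine ⟨⌊n * x⌋₊, (Nat.floor_lt hnx).2 (mul_lt_of_lt_one_right hn' hx₁), ?_, ?_⟩
    · rw [div_le_iff₀' hn']
      exact Nat.floor_le hnx
    · rw [le_div_iff₀' hn']
      exact (Nat.lt_floor_add_one _).le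
  · obtain ⟨m, rfl⟩ := Nat.exists_eq_succ_of_ne_zero hn
    refine ⟨m, m.lt_succ_self, (natCast_div_mem_Icc m.le_succ).2, ?_⟩
    rw [Nat.cast_succ, div_self (by positivity)]

/-- Linear interpolation of `a` at the nodes `k / n`, written as a sum of clamped ramps so that
its monotonicity in `x` holds termwise. -/
noncomputable def gridInterp (n : ℕ) (a : ℕ → ℝ) (x : ℝ) : ℝ :=
  a 0 + ∑ k ∈ Finset.range n,
    (a (k + 1) - a k) * (projIcc (0 : ℝ) 1 zero_le_one (n * x - k) : ℝ)

lemma gridInterp_eq_of_mem {n i : ℕ} (a : ℕ → ℝ) (hi : i < n) {x : ℝ}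
    (h₁ : (i : ℝ) / n ≤ x) (h₂ : x ≤ ((i : ℝ) + 1) / n) :
    gridInterp n a x = a i + n * (x - i / n) * (a (i + 1) - a i) := by
  have hn : (0 : ℝ) < n := by exact_mod_cast (Nat.zero_le i).trans_lt hi
  rw [div_le_iff₀ hn] at h₁
  rw [le_div_iff₀ hn] at h₂
  have ht : (n : ℝ) * (x - i / n) = n * x - i := by field_simp
  have hbelow : ∀ k ∈ Finset.range i,
      (projIcc (0 : ℝ) 1 zero_le_one (n * x - k) : ℝ) = 1 := by
    intro k hk
    have : (k : ℝ) + 1 ≤ i := by exact_mod_cast Finset.mem_range.1 hk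
    rw [projIcc_of_right_le _ (by linarith)]
  have habove : ∀ k ∈ Finset.Ico (i + 1) n,
      (a (k + 1) - a k) * (projIcc (0 : ℝ) 1 zero_le_one (n * x - k) : ℝ) = 0 := by
    intro k hk
    have : (i : ℝ) + 1 ≤ k := by exact_mod_cast (Finset.mem_Ico.1 hk).1
    rw [projIcc_of_le_left _ (by linarith), mul_zero]
  rw [gridInterp, ← Finset.sum_range_add_sum_Ico _ hi, Finset.sum_eq_zero habove,
    Finset.sum_range_succ, Finset.sum_congr rfl fun k hk => by rw [hbelow k hk, mul_one],
    Finset.sum_range_sub, projIcc_of_mem _ ⟨by linarith, by linarith⟩, ht]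
  ring

lemma gridInterp_natCast_div {n i : ℕ} (a : ℕ → ℝ) (hn : n ≠ 0) (hi : i ≤ n) :
    gridInterp n a (i / n) = a i := by
  have hn' : (n : ℝ) ≠ 0 := Nat.cast_ne_zero.2 hn
  rcases hi.lt_or_eq with hi | rfl
  · rw [gridInterp_eq_of_mem a hi le_rfl (by gcongr; linarith)]
    simp
  · obtain ⟨m, rfl⟩ := Nat.exists_eq_succ_of_ne_zero hn
    rw [gridInterp_eq_of_mem a m.lt_succ_self (by gcongr; simp) (by push_cast; rfl)]
    push_cast
    field_simp
    ring

lemma gridInterp_mono {n : ℕ} {a : ℕ → ℝ} (ha : ∀ k < n, a k ≤ a (k + 1)) :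
    Monotone (gridInterp n a) := by
  intro x y hxy
  unfold gridInterp
  gcongr with k hk
  · exact sub_nonneg.2 (ha k (Finset.mem_range.1 hk))
  · exact monotone_projIcc _ (by gcongr)

lemma gridInterp_mem_Wn {n : ℕ} {a : ℕ → ℝ} (hn : n ≠ 0) (ha₀ : a 0 = 0) (haₙ : a n = 1)
    (ha : ∀ k < n, a k ≤ a (k + 1)) (hgrid : ∀ k ≤ n, ∃ m : ℕ, a k = m / n) :
    gridInterp n a ∈ Wn n := by
  have hV₀ : gridInterp n a 0 = 0 := by
    simpa [ha₀] using gridInterp_natCast_div a hn (Nat.zero_le n)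
  have hV₁ : gridInterp n a 1 = 1 := by
    simpa [hn, haₙ] using gridInterp_natCast_div a hn le_rfl
  have hmono := gridInterp_mono ha
  refine ⟨fun x hx => ⟨hV₀ ▸ hmono hx.1, hV₁ ▸ hmono hx.2⟩, hmono.monotoneOn _, hV₀, hV₁,
    fun i hi => gridInterp_natCast_div a hn hi ▸ hgrid i hi, fun i hi x h₁ h₂ => ?_⟩
  have hsucc := gridInterp_natCast_div a hn (Nat.succ_le_of_lt hi)
  push_cast at hsucc
  rw [gridInterp_eq_of_mem a hi h₁ h₂, hsucc, gridInterp_natCast_div a hn hi.le]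

lemma exists_grid_oscillation_le {f : ℝ → ℝ} (hf : ContinuousOn f (Icc 0 1)) {ε : ℝ}
    (hε : 0 < ε) :
    ∃ n : ℕ, n ≠ 0 ∧ 1 / (n : ℝ) ≤ ε ∧ ∀ k < n, |f ((k + 1) / n) - f (k / n)| ≤ ε := by
  obtain ⟨δ, hδ, hfδ⟩ := Metric.uniformContinuousOn_iff_le.1
    (isCompact_Icc.uniformContinuousOn_of_continuous hf) ε hε
  obtain ⟨n, hn, hnδε⟩ : ∃ n : ℕ, n ≠ 0 ∧ 1 / (n : ℝ) ≤ min δ ε := by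
    obtain ⟨m, hm⟩ := exists_nat_one_div_lt (lt_min hδ hε)
    exact ⟨m + 1, m.succ_ne_zero, by exact_mod_cast hm.le⟩
  refine ⟨n, hn, hnδε.trans (min_le_right _ _), fun k hk => ?_⟩
  have hk₁ := natCast_div_mem_Icc hk
  push_cast at hk₁
  have hdist : dist (((k : ℝ) + 1) / n) (k / n) ≤ δ := by
    rw [Real.dist_eq, ← sub_div, add_sub_cancel_left, abs_of_nonneg (by positivity)]
    exact hnδε.trans (min_le_left _ _)
  simpa only [Real.dist_eq] using hfδ _ hk₁ _ (natCast_div_mem_Icc hk.le) hdist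

lemma abs_gridInterp_sub_le {n : ℕ} {f : ℝ → ℝ} {a : ℕ → ℝ} {δ η : ℝ} (hn : n ≠ 0)
    (hf : MonotoneOn f (Icc 0 1)) (ha : ∀ k < n, a k ≤ a (k + 1))
    (ha_le : ∀ k ≤ n, a k ≤ f (k / n)) (hle_a : ∀ k ≤ n, f (k / n) ≤ a k + η)
    (hosc : ∀ k < n, |f ((k + 1) / n) - f (k / n)| ≤ δ) {x : ℝ} (hx : x ∈ Icc (0 : ℝ) 1) :
    |gridInterp n a x - f x| ≤ δ + η := by
  obtain ⟨i, hi, h₁, h₂⟩ := exists_grid_cell hn hx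
  have hn' : (0 : ℝ) < n := Nat.cast_pos.2 (Nat.pos_of_ne_zero hn)
  have ht₀ : 0 ≤ n * (x - i / n) := mul_nonneg hn'.le (sub_nonneg.2 h₁)
  have ht₁ : n * (x - i / n) ≤ 1 := by
    rw [mul_sub, mul_div_cancel₀ _ hn'.ne']
    rw [le_div_iff₀ hn'] at h₂
    linarith
  have hi₁ := natCast_div_mem_Icc hi
  have hai₁ := ha_le (i + 1) hi
  push_cast at hi₁ hai₁
  have hfx₁ : f (i / n) ≤ f x := hf (natCast_div_mem_Icc hi.le) hx h₁
  have hfx₂ : f x ≤ f ((i + 1) / n) := hf hx hi₁ h₂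
  have hd := ha i hi
  have hlow := mul_nonneg ht₀ (sub_nonneg.2 hd)
  have hupp := mul_nonneg (sub_nonneg.2 ht₁) (sub_nonneg.2 hd)
  rw [gridInterp_eq_of_mem a hi h₁ h₂, abs_le]
  constructor <;> linarith [ha_le i hi.le, hle_a i hi.le, hosc i hi,
    le_abs_self (f ((i + 1) / n) - f (i / n))]

noncomputable def floorGrid (n : ℕ) (y : ℝ) : ℝ := ⌊n * y⌋₊ / n

lemma floorGrid_mono (n : ℕ) : Monotone (floorGrid n) := fun _ _ h => by
  unfold floorGrid; gcongr

lemma floorGrid_zero (n : ℕ) : floorGrid n 0 = 0 := by simp [floorGrid]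

lemma floorGrid_one {n : ℕ} (hn : n ≠ 0) : floorGrid n 1 = 1 := by simp [floorGrid, hn]

lemma floorGrid_le (n : ℕ) {y : ℝ} (hy : 0 ≤ y) : floorGrid n y ≤ y := by
  rcases (Nat.zero_le n).eq_or_lt with rfl | hn
  · simpa [floorGrid] using hy
  have hn' : (0 : ℝ) < n := by exact_mod_cast hn
  rw [floorGrid, div_le_iff₀ hn', mul_comm]
  exact Nat.floor_le (by positivity)

lemma le_floorGrid_add {n : ℕ} (hn : n ≠ 0) (y : ℝ) : y ≤ floorGrid n y + 1 / n := by
  have hn' : (0 : ℝ) < n := Nat.cast_pos.2 (Nat.pos_of_ne_zero hn)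
  rw [floorGrid, ← add_div, le_div_iff₀ hn', mul_comm]
  exact (Nat.lt_floor_add_one _).le

theorem wn_approximates_arbitrary_function_general
    (f : ℝ → ℝ)
    (hcont : ContinuousOn f (Set.Icc (0:ℝ) 1))
    (hmono : StrictMonoOn f (Set.Icc (0:ℝ) 1))
    (hf0 : f 0 = 0) (hf1 : f 1 = 1)
    (ε : ℝ) (hε : 0 < ε) :
    ∃ n : ℕ, 1 ≤ n ∧ ∃ V ∈ Wn n, ∀ x ∈ Set.Icc (0:ℝ) 1, |V x - f x| ≤ ε := by
  have hf := hmono.monotoneOn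
  obtain ⟨n, hn, hnε, hosc⟩ := exists_grid_oscillation_le hcont (half_pos hε)
  set a : ℕ → ℝ := fun k => floorGrid n (f (k / n))
  have ha : ∀ k < n, a k ≤ a (k + 1) := fun k hk =>
    floorGrid_mono n (hf (natCast_div_mem_Icc hk.le) (natCast_div_mem_Icc hk) (by gcongr; omega))
  have hf_nonneg : ∀ k ≤ n, 0 ≤ f (k / n) := fun k hk =>
    hf0 ▸ hf (left_mem_Icc.2 zero_le_one) (natCast_div_mem_Icc hk) (by positivity)
  refine ⟨n, Nat.one_le_iff_ne_zero.2 hn, gridInterp n a,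
    gridInterp_mem_Wn hn (by simp [a, hf0, floorGrid_zero]) (by simp [a, hn, hf1, floorGrid_one])
      ha (fun k _ => ⟨_, rfl⟩), fun x hx => ?_⟩
  have := abs_gridInterp_sub_le hn hf ha (fun k hk => floorGrid_le n (hf_nonneg k hk))
    (fun k _ => le_floorGrid_add hn _) hosc hx
  linarith

/-- Every continuous strictly increasing `f : [0,1] → [0,1]` with
`f(0)=0`, `f(1)=1` is uniformly approximated within any `ε > 0` by an element of some
`W_n`. -/
theorem wn_approximates_arbitrary_function
    (f : ℝ → ℝ)
    (hcont : ContinuousOn f (Set.Icc (0:ℝ) 1))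
    (hmono : StrictMonoOn f (Set.Icc (0:ℝ) 1))
    (hrange : ∀ x ∈ Set.Icc (0:ℝ) 1, f x ∈ Set.Icc (0:ℝ) 1)
    (hf0 : f 0 = 0) (hf1 : f 1 = 1)
    (ε : ℝ) (hε : 0 < ε) :
    ∃ n : ℕ, 1 ≤ n ∧ ∃ V ∈ Wn n, ∀ x ∈ Set.Icc (0:ℝ) 1, |V x - f x| ≤ ε :=
  wn_approximates_arbitrary_function_general f hcont hmono hf0 hf1 ε hε
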